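/- For any graph G and any layering of G, if S is a layered ℓ-separator set for G itself (at most ℓ vertices per layer, all components of G − S of size at most n/2), then the edges of G incident to S can be partitioned into at most 5ℓ classes such that, with respect to any layer-by-layer ordering placing the vertices of S ∩ V_i at the start of layer i according to a fixed ordering ρ_i, no two edges in the same class cross. -/
import Mathlib


/-- `lay` is a layering of `G`: every edge joins vertices in the same layer
or in consecutive layers. -/
def IsLayering {V : Type*} (G : SimpleGraph V) (lay : V → ℕ) : Prop :=
  ∀ u v : V, G.Adj u v →
    lay u = lay v ∨ lay u + 1 = lay v ∨ lay v + 1 = lay u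

/-- `G` has a layered `ℓ`-separator with respect to the layering `lay`: every
subgraph `G'` of `G` contains a set `S` with at most `ℓ` vertices in each layer
such that every connected component of `G' − S` has at most `|V(G')| / 2`
vertices. -/
def HasLayeredSeparator {V : Type*} (G : SimpleGraph V) (lay : V → ℕ) (ℓ : ℕ) : Prop :=
  ∀ G' : G.Subgraph, ∃ S ⊆ G'.verts,
    (∀ i : ℕ, (S ∩ {v | lay v = i}).ncard ≤ ℓ) ∧
    ∀ c : ((G'.deleteVerts S).coe).ConnectedComponent,
      2 * c.supp.ncard ≤ G'.verts.ncard

/-- `G` has a stack layout with `s` stacks: an injective position function on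
the vertices and an assignment of the edges to `s` stacks such that no two
edges in the same stack cross. -/
def HasStackLayout {V : Type*} (G : SimpleGraph V) (s : ℕ) : Prop :=
  ∃ (pos : V → ℕ) (f : Sym2 V → ℕ), Function.Injective pos ∧
    (∀ v w : V, G.Adj v w → f s(v, w) < s) ∧
    (∀ v w x y : V, G.Adj v w → G.Adj x y → f s(v, w) = f s(x, y) →
      ¬ (pos v < pos x ∧ pos x < pos w ∧ pos w < pos y))

/-- `G` has a queue layout with `q` queues: an injective position function on
the vertices and an assignment of the edges to `q` queues such that no two
edges in the same queue nest. -/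
def HasQueueLayout {V : Type*} (G : SimpleGraph V) (q : ℕ) : Prop :=
  ∃ (pos : V → ℕ) (f : Sym2 V → ℕ), Function.Injective pos ∧
    (∀ v w : V, G.Adj v w → f s(v, w) < q) ∧
    (∀ v w x y : V, G.Adj v w → G.Adj x y → f s(v, w) = f s(x, y) →
      ¬ (pos v < pos x ∧ pos x < pos y ∧ pos y < pos w))


open Classical in
/-- Rank of `u` among the separator vertices of its layer, by `ρ`-order. -/
noncomputable def sepRank {V : Type*} (S : Set V) (lay : V → ℕ) (ρ : V → ℕ) (u : V) : ℕ :=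
  {w | w ∈ S ∧ lay w = lay u ∧ ρ w < ρ u}.ncard

lemma sepRank_lt {V : Type*} [Fintype V] {S : Set V} {lay ρ : V → ℕ} {ℓ : ℕ}
    (hS : ∀ i : ℕ, (S ∩ {v | lay v = i}).ncard ≤ ℓ) {u : V} (hu : u ∈ S) :
    sepRank S lay ρ u < ℓ := by
  have hsub : {w | w ∈ S ∧ lay w = lay u ∧ ρ w < ρ u} ⊂ S ∩ {v | lay v = lay u} := by
    constructor
    · rintro w ⟨h1, h2, _⟩; exact ⟨h1, h2⟩
    · intro hcon
      have hmem : u ∈ S ∩ {v | lay v = lay u} := ⟨hu, rfl⟩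
      exact absurd (hcon hmem).2.2 (lt_irrefl _)
  exact lt_of_lt_of_le (Set.ncard_lt_ncard hsub (Set.toFinite _)) (hS (lay u))

lemma sepRank_strictMono {V : Type*} [Fintype V] {S : Set V} {lay ρ : V → ℕ}
    {u₁ u₂ : V} (h1 : u₁ ∈ S) (hl : lay u₁ = lay u₂) (h : ρ u₁ < ρ u₂) :
    sepRank S lay ρ u₁ < sepRank S lay ρ u₂ := by
  have hsub : insert u₁ {w | w ∈ S ∧ lay w = lay u₁ ∧ ρ w < ρ u₁}
      ⊆ {w | w ∈ S ∧ lay w = lay u₂ ∧ ρ w < ρ u₂} := by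
    intro w hw
    rcases Set.mem_insert_iff.mp hw with rfl | ⟨hw1, hw2, hw3⟩
    · exact ⟨h1, hl, h⟩
    · exact ⟨hw1, hw2.trans hl, hw3.trans h⟩
  have hnot : u₁ ∉ {w | w ∈ S ∧ lay w = lay u₁ ∧ ρ w < ρ u₁} :=
    fun hc => lt_irrefl _ hc.2.2
  have hle := Set.ncard_le_ncard hsub (Set.toFinite _)
  rw [Set.ncard_insert_of_notMem hnot (Set.toFinite _)] at hle
  simp only [sepRank]
  omega

lemma sepRank_inj {V : Type*} [Fintype V] {S : Set V} {lay ρ : V → ℕ}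
    (hρ : Function.Injective ρ) {u₁ u₂ : V} (h1 : u₁ ∈ S) (h2 : u₂ ∈ S)
    (hl : lay u₁ = lay u₂) (hr : sepRank S lay ρ u₁ = sepRank S lay ρ u₂) :
    u₁ = u₂ := by
  rcases lt_trichotomy (ρ u₁) (ρ u₂) with h | h | h
  · exact absurd hr (sepRank_strictMono h1 hl h).ne
  · exact hρ h
  · exact absurd hr.symm (sepRank_strictMono h2 hl.symm h).ne

open Classical in
/-- The canonical separator endpoint of an intra-layer edge. -/
noncomputable def sepOf {V : Type*} (S : Set V) (ρ : V → ℕ) (v w : V) : V :=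
  if v ∈ S then (if w ∈ S then (if ρ v ≤ ρ w then v else w) else v)
  else (if w ∈ S then w else (if ρ v ≤ ρ w then v else w))

lemma rmin_comm {V : Type*} {ρ : V → ℕ} (hρ : Function.Injective ρ) (v w : V) :
    (if ρ v ≤ ρ w then v else w) = (if ρ w ≤ ρ v then w else v) := by
  rcases lt_trichotomy (ρ v) (ρ w) with hr | hr | hr
  · rw [if_pos hr.le, if_neg (not_le.mpr hr)]
  · rw [if_pos hr.le, if_pos hr.ge, hρ hr]
  · rw [if_neg (not_le.mpr hr), if_pos hr.le]

lemma sepOf_comm {V : Type*} {S : Set V} {ρ : V → ℕ} (hρ : Function.Injective ρ)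
    (v w : V) : sepOf S ρ v w = sepOf S ρ w v := by
  unfold sepOf
  by_cases hv : v ∈ S <;> by_cases hw : w ∈ S <;>
    simp only [hv, hw, if_true, if_false] <;> exact rmin_comm hρ v w

lemma sepOf_spec {V : Type*} {S : Set V} {ρ : V → ℕ} (v w : V) (h : v ∈ S ∨ w ∈ S) :
    sepOf S ρ v w ∈ S ∧ (sepOf S ρ v w = v ∨ sepOf S ρ v w = w) := by
  unfold sepOf
  split_ifs <;>
    first
    | exact ⟨by tauto, Or.inl rfl⟩
    | exact ⟨by tauto, Or.inr rfl⟩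

open Classical in
/-- The class of an edge `{v, w}` incident to the separator `S`. -/
noncomputable def edgeClass {V : Type*} (S : Set V) (lay : V → ℕ) (ρ : V → ℕ)
    (ℓ : ℕ) (v w : V) : ℕ :=
  if lay v = lay w then
    sepRank S lay ρ (sepOf S ρ v w)
  else if lay v < lay w then
    if v ∈ S then
      (if lay v % 2 = 0 then ℓ else 2 * ℓ) + sepRank S lay ρ v
    else
      (if lay v % 2 = 0 then 3 * ℓ else 4 * ℓ) + sepRank S lay ρ w
  else
    if w ∈ S then
      (if lay w % 2 = 0 then ℓ else 2 * ℓ) + sepRank S lay ρ w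
    else
      (if lay w % 2 = 0 then 3 * ℓ else 4 * ℓ) + sepRank S lay ρ v

lemma edgeClass_comm {V : Type*} {S : Set V} {lay ρ : V → ℕ} {ℓ : ℕ}
    (hρ : Function.Injective ρ) (v w : V) :
    edgeClass S lay ρ ℓ v w = edgeClass S lay ρ ℓ w v := by
  rcases eq_or_ne v w with rfl | hvw
  · rfl
  unfold edgeClass
  rcases lt_trichotomy (lay v) (lay w) with h | h | h
  · rw [if_neg h.ne, if_pos h, if_neg h.ne', if_neg (not_lt.mpr h.le)]
  · rw [if_pos h, if_pos h.symm, sepOf_comm hρ]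
  · rw [if_neg h.ne', if_neg (not_lt.mpr h.le), if_neg h.ne, if_pos h]

/-- If `S` is a layered `ℓ`-separator set for `G` itself, then the edges of `G`
incident to `S` can be partitioned into at most `5ℓ` classes such that, with
respect to any layer-by-layer ordering placing the vertices of `S ∩ V_i` at the
start of layer `i` according to a fixed ordering `ρ`, no two edges in the same
class cross. -/
theorem separator_incident_edges_five_ell_classes {V : Type*} [Fintype V]
    (G : SimpleGraph V) (lay : V → ℕ) (ℓ : ℕ) (hlay : IsLayering G lay)
    (S : Set V)
    (hSsize : ∀ i : ℕ, (S ∩ {v | lay v = i}).ncard ≤ ℓ)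
    (hScomp : ∀ c : (G.induce Sᶜ).ConnectedComponent,
      2 * c.supp.ncard ≤ Fintype.card V)
    (ρ : V → ℕ) (hρ : Function.Injective ρ) :
    ∃ f : Sym2 V → ℕ,
      (∀ v w : V, G.Adj v w → (v ∈ S ∨ w ∈ S) → f s(v, w) < 5 * ℓ) ∧
      ∀ pos : V → ℕ, Function.Injective pos →
        (∀ u v : V, lay u < lay v → pos u < pos v) →
        (∀ u v : V, lay u = lay v → u ∈ S → v ∉ S → pos u < pos v) →
        (∀ u v : V, lay u = lay v → u ∈ S → v ∈ S → (pos u < pos v ↔ ρ u < ρ v)) →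
        ∀ v w x y : V, G.Adj v w → G.Adj x y →
          (v ∈ S ∨ w ∈ S) → (x ∈ S ∨ y ∈ S) →
          f s(v, w) = f s(x, y) →
          ¬ (pos v < pos x ∧ pos x < pos w ∧ pos w < pos y) := by
  classical
  refine ⟨Sym2.lift ⟨fun a b => edgeClass S lay ρ ℓ a b,
    fun a b => edgeClass_comm hρ a b⟩, ?_, ?_⟩
  · intro v w _ hinc
    show edgeClass S lay ρ ℓ v w < 5 * ℓ
    unfold edgeClass
    split_ifs
    · obtain ⟨hmem, -⟩ := sepOf_spec (S := S) (ρ := ρ) v w hinc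
      have := sepRank_lt (ρ := ρ) hSsize hmem
      omega
    all_goals
      first
      | (have hx : v ∈ S := by
           first | assumption | exact Or.resolve_right hinc (by assumption)
         have := sepRank_lt (ρ := ρ) hSsize hx; omega)
      | (have hx : w ∈ S := by
           first | assumption | exact Or.resolve_left hinc (by assumption)
         have := sepRank_lt (ρ := ρ) hSsize hx; omega)
  · intro pos hposinj hmono h3 h4 v w x y hvw hxy hincvw hincxy hf
    rintro ⟨hc1, hc2, hc3⟩
    have hf' : edgeClass S lay ρ ℓ v w = edgeClass S lay ρ ℓ x y := hf
    clear hf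
    have lmono : ∀ a b : V, pos a < pos b → lay a ≤ lay b := by
      intro a b hab
      by_contra hcon
      exact absurd (hmono b a (by omega)) (by omega)
    have l1 : lay v ≤ lay x := lmono _ _ hc1
    have l2 : lay x ≤ lay w := lmono _ _ hc2
    have l3 : lay w ≤ lay y := lmono _ _ hc3
    have lvw : lay v ≤ lay w := lmono _ _ (hc1.trans hc2)
    have lxy : lay x ≤ lay y := lmono _ _ (hc2.trans hc3)
    have e1 : lay v = lay w ∨ lay w = lay v + 1 := by
      rcases hlay v w hvw with h | h | h <;> omega
    have e2 : lay x = lay y ∨ lay y = lay x + 1 := by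
      rcases hlay x y hxy with h | h | h <;> omega
    rcases e1 with h1 | h1 <;> rcases e2 with h2 | h2
    · -- both intra-layer
      have hall : lay x = lay v := by omega
      have hfvw : edgeClass S lay ρ ℓ v w = sepRank S lay ρ (sepOf S ρ v w) := by
        unfold edgeClass; rw [if_pos h1]
      have hfxy : edgeClass S lay ρ ℓ x y = sepRank S lay ρ (sepOf S ρ x y) := by
        unfold edgeClass; rw [if_pos h2]
      rw [hfvw, hfxy] at hf'
      obtain ⟨h1S, h1e⟩ := sepOf_spec (S := S) (ρ := ρ) v w hincvw
      obtain ⟨h2S, h2e⟩ := sepOf_spec (S := S) (ρ := ρ) x y hincxy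
      have hlay12 : lay (sepOf S ρ v w) = lay (sepOf S ρ x y) := by
        rcases h1e with h | h <;> rcases h2e with h' | h' <;> rw [h, h'] <;> omega
      have heq := sepRank_inj hρ h1S h2S hlay12 hf'
      rcases h1e with h | h <;> rcases h2e with h' | h' <;> rw [h, h'] at heq <;>
        subst heq <;> omega
    · -- intra vs inter: class values live in disjoint ranges
      have hfvw : edgeClass S lay ρ ℓ v w = sepRank S lay ρ (sepOf S ρ v w) := by
        unfold edgeClass; rw [if_pos h1]
      obtain ⟨h1S, -⟩ := sepOf_spec (S := S) (ρ := ρ) v w hincvw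
      have hlt : edgeClass S lay ρ ℓ v w < ℓ := by
        rw [hfvw]; exact sepRank_lt hSsize h1S
      have hge : ℓ ≤ edgeClass S lay ρ ℓ x y := by
        unfold edgeClass
        rw [if_neg (by omega : ¬ lay x = lay y), if_pos (by omega : lay x < lay y)]
        split_ifs <;> omega
      omega
    · -- inter vs intra
      have hfxy : edgeClass S lay ρ ℓ x y = sepRank S lay ρ (sepOf S ρ x y) := by
        unfold edgeClass; rw [if_pos h2]
      obtain ⟨h2S, -⟩ := sepOf_spec (S := S) (ρ := ρ) x y hincxy
      have hlt : edgeClass S lay ρ ℓ x y < ℓ := by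
        rw [hfxy]; exact sepRank_lt hSsize h2S
      have hge : ℓ ≤ edgeClass S lay ρ ℓ v w := by
        unfold edgeClass
        rw [if_neg (by omega : ¬ lay v = lay w), if_pos (by omega : lay v < lay w)]
        split_ifs <;> omega
      omega
    · -- both inter-layer
      have hfvw : edgeClass S lay ρ ℓ v w =
          if v ∈ S then (if lay v % 2 = 0 then ℓ else 2 * ℓ) + sepRank S lay ρ v
          else (if lay v % 2 = 0 then 3 * ℓ else 4 * ℓ) + sepRank S lay ρ w := by
        unfold edgeClass
        rw [if_neg (by omega : ¬ lay v = lay w), if_pos (by omega : lay v < lay w)]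
      have hfxy : edgeClass S lay ρ ℓ x y =
          if x ∈ S then (if lay x % 2 = 0 then ℓ else 2 * ℓ) + sepRank S lay ρ x
          else (if lay x % 2 = 0 then 3 * ℓ else 4 * ℓ) + sepRank S lay ρ y := by
        unfold edgeClass
        rw [if_neg (by omega : ¬ lay x = lay y), if_pos (by omega : lay x < lay y)]
      rw [hfvw, hfxy] at hf'
      by_cases hvS : v ∈ S <;> by_cases hxS : x ∈ S
      · rw [if_pos hvS, if_pos hxS] at hf'
        have r1 := sepRank_lt (ρ := ρ) hSsize hvS
        have r2 := sepRank_lt (ρ := ρ) hSsize hxS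
        by_cases p1 : lay v % 2 = 0 <;> by_cases p2 : lay x % 2 = 0 <;>
          [rw [if_pos p1, if_pos p2] at hf'; rw [if_pos p1, if_neg p2] at hf';
           rw [if_neg p1, if_pos p2] at hf'; rw [if_neg p1, if_neg p2] at hf']
        · have hr : sepRank S lay ρ v = sepRank S lay ρ x := by omega
          have hlvx : lay v = lay x := by omega
          have := sepRank_inj hρ hvS hxS hlvx hr
          subst this; omega
        · omega
        · omega
        · have hr : sepRank S lay ρ v = sepRank S lay ρ x := by omega
          have hlvx : lay v = lay x := by omega
          have := sepRank_inj hρ hvS hxS hlvx hr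
          subst this; omega
      · rw [if_pos hvS, if_neg hxS] at hf'
        have hyS : y ∈ S := hincxy.resolve_left hxS
        have r1 := sepRank_lt (ρ := ρ) hSsize hvS
        have r2 := sepRank_lt (ρ := ρ) hSsize hyS
        split_ifs at hf' <;> omega
      · rw [if_neg hvS, if_pos hxS] at hf'
        have hwS : w ∈ S := hincvw.resolve_left hvS
        have r1 := sepRank_lt (ρ := ρ) hSsize hwS
        have r2 := sepRank_lt (ρ := ρ) hSsize hxS
        split_ifs at hf' <;> omega
      · rw [if_neg hvS, if_neg hxS] at hf'
        have hwS : w ∈ S := hincvw.resolve_left hvS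
        have hyS : y ∈ S := hincxy.resolve_left hxS
        have r1 := sepRank_lt (ρ := ρ) hSsize hwS
        have r2 := sepRank_lt (ρ := ρ) hSsize hyS
        by_cases p1 : lay v % 2 = 0 <;> by_cases p2 : lay x % 2 = 0 <;>
          [rw [if_pos p1, if_pos p2] at hf'; rw [if_pos p1, if_neg p2] at hf';
           rw [if_neg p1, if_pos p2] at hf'; rw [if_neg p1, if_neg p2] at hf']
        · have hr : sepRank S lay ρ w = sepRank S lay ρ y := by omega
          have hlwy : lay w = lay y := by omega
          have := sepRank_inj hρ hwS hyS hlwy hr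
          subst this; omega
        · omega
        · omega
        · have hr : sepRank S lay ρ w = sepRank S lay ρ y := by omega
          have hlwy : lay w = lay y := by omega
          have := sepRank_inj hρ hwS hyS hlwy hr
          subst this; omega
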